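/- Let u, v be admissible vector fields and θ, η admissible scalar functions; set U = u−v, Θ = θ−η, |Φ|² = |U|² + |Θ|², ‖Φ‖² = ‖U‖² + ‖Θ‖², and |ψ|⁴_{L⁴} = ∫_D (|v|² + η²)² dx. Assume c₁ > 0 is a constant such that |U|²_{L⁴} ≤ c₁ |U| ‖U‖ and |Θ|²_{L⁴} ≤ c₁ |Θ| ‖Θ‖. Then there is a constant c > 0 depending only on c₁ such that for every α > 0, |⟨B₁(u,u),U⟩ − ⟨B₁(v,v),U⟩ + ⟨B₂(u,θ),Θ⟩ − ⟨B₂(v,η),Θ⟩| ≤ α ‖Φ‖² + (3³ c² / (2⁴ α³)) |Φ|² |ψ|⁴_{L⁴}. -/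

import Mathlib

open MeasureTheory Real

noncomputable section

/-- The rectangular domain `D = (0,l) × (0,1)` in the plane. -/
def domD (l : ℝ) : Set (ℝ × ℝ) := Set.Ioo 0 l ×ˢ Set.Ioo (0:ℝ) 1

/-- Partial derivative in the first variable. -/
def pd1 (f : ℝ × ℝ → ℝ) (x : ℝ × ℝ) : ℝ := fderiv ℝ f x (1, 0)

/-- Partial derivative in the second variable. -/
def pd2 (f : ℝ × ℝ → ℝ) (x : ℝ × ℝ) : ℝ := fderiv ℝ f x (0, 1)

/-- A vector field is admissible if it is `C¹`, periodic in `x₁` with period `l`,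
vanishes on the lines `x₂ = 0` and `x₂ = 1`, and is divergence free. -/
def AdmissibleVec (l : ℝ) (u : ℝ × ℝ → ℝ × ℝ) : Prop :=
  ContDiff ℝ 1 u ∧
  (∀ x₁ x₂ : ℝ, u (x₁ + l, x₂) = u (x₁, x₂)) ∧
  (∀ x₁ : ℝ, u (x₁, 0) = 0) ∧
  (∀ x₁ : ℝ, u (x₁, 1) = 0) ∧
  (∀ x : ℝ × ℝ, pd1 (fun y => (u y).1) x + pd2 (fun y => (u y).2) x = 0)

/-- A scalar function is admissible if it is `C¹` and periodic in `x₁` with period `l`. -/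
def AdmissibleScalar (l : ℝ) (θ : ℝ × ℝ → ℝ) : Prop :=
  ContDiff ℝ 1 θ ∧ (∀ x₁ x₂ : ℝ, θ (x₁ + l, x₂) = θ (x₁, x₂))

/-- The trilinear form `⟨B₁(u,v),w⟩ = Σ_{i,j} ∫_D u_i (∂_i v_j) w_j dx`. -/
def B1 (l : ℝ) (u v w : ℝ × ℝ → ℝ × ℝ) : ℝ :=
  ∫ x in domD l,
    ((u x).1 * pd1 (fun y => (v y).1) x * (w x).1
      + (u x).1 * pd1 (fun y => (v y).2) x * (w x).2
      + (u x).2 * pd2 (fun y => (v y).1) x * (w x).1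
      + (u x).2 * pd2 (fun y => (v y).2) x * (w x).2)

/-- The trilinear form `⟨B₂(u,θ),η⟩ = Σ_i ∫_D u_i (∂_i θ) η dx`. -/
def B2 (l : ℝ) (u : ℝ × ℝ → ℝ × ℝ) (θ η : ℝ × ℝ → ℝ) : ℝ :=
  ∫ x in domD l, ((u x).1 * pd1 θ x * η x + (u x).2 * pd2 θ x * η x)

/-- `L²(D)` norm of a vector field. -/
def L2normVec (l : ℝ) (u : ℝ × ℝ → ℝ × ℝ) : ℝ :=
  Real.sqrt (∫ x in domD l, ((u x).1 ^ 2 + (u x).2 ^ 2))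

/-- `L²(D)` norm of a scalar function. -/
def L2normScalar (l : ℝ) (f : ℝ × ℝ → ℝ) : ℝ :=
  Real.sqrt (∫ x in domD l, (f x) ^ 2)

/-- `L⁴(D)` norm of a vector field. -/
def L4normVec (l : ℝ) (u : ℝ × ℝ → ℝ × ℝ) : ℝ :=
  (∫ x in domD l, ((u x).1 ^ 2 + (u x).2 ^ 2) ^ 2) ^ ((1:ℝ)/4)

/-- `L⁴(D)` norm of a scalar function. -/
def L4normScalar (l : ℝ) (f : ℝ × ℝ → ℝ) : ℝ :=
  (∫ x in domD l, (f x) ^ 4) ^ ((1:ℝ)/4)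

/-- Gradient (`H¹` seminorm / `V`) norm of a vector field. -/
def H1normVec (l : ℝ) (u : ℝ × ℝ → ℝ × ℝ) : ℝ :=
  Real.sqrt (∫ x in domD l,
    (pd1 (fun y => (u y).1) x ^ 2 + pd2 (fun y => (u y).1) x ^ 2
      + pd1 (fun y => (u y).2) x ^ 2 + pd2 (fun y => (u y).2) x ^ 2))

/-- Gradient (`H¹` seminorm / `V`) norm of a scalar function. -/
def H1normScalar (l : ℝ) (f : ℝ × ℝ → ℝ) : ℝ :=
  Real.sqrt (∫ x in domD l, (pd1 f x ^ 2 + pd2 f x ^ 2))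

/-! ### Auxiliary lemmas -/

lemma intgOn {l : ℝ} {f : ℝ × ℝ → ℝ} (hf : Continuous f) : IntegrableOn f (domD l) := by
  have hK : IsCompact (Set.Icc (0:ℝ) l ×ˢ Set.Icc (0:ℝ) 1) := (isCompact_Icc).prod isCompact_Icc
  have : IntegrableOn f (Set.Icc (0:ℝ) l ×ˢ Set.Icc (0:ℝ) 1) :=
    hf.continuousOn.integrableOn_compact hK
  exact this.mono_set (Set.prod_mono Set.Ioo_subset_Icc_self Set.Ioo_subset_Icc_self)

lemma cs3 (a1 a2 a3 b1 b2 b3 : ℝ) :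
    a1*b1 + a2*b2 + a3*b3 ≤ Real.sqrt (a1^2+a2^2+a3^2) * Real.sqrt (b1^2+b2^2+b3^2) := by
  rcases le_or_gt (a1*b1 + a2*b2 + a3*b3) 0 with h | h
  · exact h.trans (mul_nonneg (Real.sqrt_nonneg _) (Real.sqrt_nonneg _))
  · rw [← Real.sqrt_mul (by positivity)]
    rw [show a1*b1 + a2*b2 + a3*b3 = Real.sqrt ((a1*b1 + a2*b2 + a3*b3)^2) from
      (Real.sqrt_sq h.le).symm]
    apply Real.sqrt_le_sqrt
    nlinarith [sq_nonneg (a1*b2 - a2*b1), sq_nonneg (a1*b3 - a3*b1), sq_nonneg (a2*b3 - a3*b2)]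

lemma csInt {l : ℝ} {f g : ℝ × ℝ → ℝ} (hf : Continuous f) (hg : Continuous g)
    (hf0 : ∀ x, 0 ≤ f x) (hg0 : ∀ x, 0 ≤ g x) :
    ∫ x in domD l, f x * g x ≤
      Real.sqrt (∫ x in domD l, f x ^ 2) * Real.sqrt (∫ x in domD l, g x ^ 2) := by
  have hpq : Real.HolderConjugate 2 2 := by constructor <;> norm_num
  have hmf : MemLp f (ENNReal.ofReal 2) (volume.restrict (domD l)) := by
    rw [show ENNReal.ofReal 2 = 2 by norm_num]
    exact (memLp_two_iff_integrable_sq hf.aestronglyMeasurable).2 (intgOn (by continuity))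
  have hmg : MemLp g (ENNReal.ofReal 2) (volume.restrict (domD l)) := by
    rw [show ENNReal.ofReal 2 = 2 by norm_num]
    exact (memLp_two_iff_integrable_sq hg.aestronglyMeasurable).2 (intgOn (by continuity))
  have := integral_mul_le_Lp_mul_Lq_of_nonneg hpq
    (Filter.Eventually.of_forall hf0) (Filter.Eventually.of_forall hg0) hmf hmg
  calc ∫ x in domD l, f x * g x
      ≤ (∫ x in domD l, f x ^ (2:ℝ)) ^ ((1:ℝ)/2) * (∫ x in domD l, g x ^ (2:ℝ)) ^ ((1:ℝ)/2) := this
    _ = _ := by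
        rw [← Real.sqrt_eq_rpow, ← Real.sqrt_eq_rpow]
        norm_num [Real.rpow_natCast]

lemma domD_ae (l : ℝ) :
    (domD l : Set (ℝ × ℝ)) =ᵐ[volume] (Set.Ioc 0 l ×ˢ Set.Ioc (0:ℝ) 1 : Set (ℝ × ℝ)) := by
  rw [Filter.eventuallyEq_set]
  have hsl : volume (({l} ×ˢ (Set.univ : Set ℝ)) : Set (ℝ×ℝ)) = 0 := by
    rw [Measure.volume_eq_prod, Measure.prod_prod]
    simp
  have hs1 : volume (((Set.univ : Set ℝ) ×ˢ {(1:ℝ)}) : Set (ℝ×ℝ)) = 0 := by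
    rw [Measure.volume_eq_prod, Measure.prod_prod]
    simp
  have h1 : volume (Set.Ioc 0 l ×ˢ Set.Ioc (0:ℝ) 1 \ domD l) = 0 := by
    refine measure_mono_null ?_ (measure_union_null hsl hs1)
    rintro ⟨x, y⟩ ⟨⟨hx, hy⟩, hn⟩
    simp only [Set.mem_Ioc] at hx hy
    by_cases hxl : x < l
    · right
      have hy1 : ¬ y < 1 := fun hc => hn ⟨Set.mem_Ioo.2 ⟨hx.1, hxl⟩, Set.mem_Ioo.2 ⟨hy.1, hc⟩⟩
      have : y = 1 := le_antisymm hy.2 (not_lt.1 hy1)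
      simp [this]
    · left
      have : x = l := le_antisymm hx.2 (not_lt.1 hxl)
      simp [this]
  have h2 : volume (domD l \ Set.Ioc 0 l ×ˢ Set.Ioc (0:ℝ) 1) = 0 := by
    refine measure_mono_null ?_ (measure_empty (μ := (volume : Measure (ℝ×ℝ))))
    rintro ⟨x, y⟩ ⟨⟨hx, hy⟩, hn⟩
    exact absurd ⟨Set.mem_Ioc.2 ⟨hx.1, hx.2.le⟩, Set.mem_Ioc.2 ⟨hy.1, hy.2.le⟩⟩ hn
  filter_upwards [measure_eq_zero_iff_ae_notMem.1 h1, measure_eq_zero_iff_ae_notMem.1 h2] with x hx1 hx2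
  constructor
  · intro h; by_contra hc; exact hx2 ⟨h, hc⟩
  · intro h; by_contra hc; exact hx1 ⟨h, hc⟩

lemma pd_cont {f : ℝ × ℝ → ℝ} (hf : ContDiff ℝ 1 f) : Continuous (pd1 f) ∧ Continuous (pd2 f) := by
  have h : Continuous (fderiv ℝ f) := (hf.continuous_fderiv one_ne_zero)
  constructor
  · exact (ContinuousLinearMap.apply ℝ ℝ ((1:ℝ), (0:ℝ))).continuous.comp h
  · exact (ContinuousLinearMap.apply ℝ ℝ ((0:ℝ), (1:ℝ))).continuous.comp h

lemma div_thm {l : ℝ} (hl : 0 < l) {F G : ℝ × ℝ → ℝ} (hF : ContDiff ℝ 1 F) (hG : ContDiff ℝ 1 G)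
    (hFper : ∀ y : ℝ, F (l, y) = F (0, y)) (hG0 : ∀ x : ℝ, G (x, 0) = 0)
    (hG1 : ∀ x : ℝ, G (x, 1) = 0) :
    ∫ x in domD l, (pd1 F x + pd2 G x) = 0 := by
  have hcont : Continuous (fun x => pd1 F x + pd2 G x) :=
    (pd_cont hF).1.add (pd_cont hG).2
  have key := integral2_divergence_prod_of_hasFDerivAt_off_countable F G
    (fderiv ℝ F) (fderiv ℝ G) 0 0 l 1 ∅ Set.countable_empty
    (hF.continuous.continuousOn) (hG.continuous.continuousOn)
    (fun x _ => (hF.differentiable one_ne_zero x).hasFDerivAt)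
    (fun x _ => (hG.differentiable one_ne_zero x).hasFDerivAt)
    (hcont.continuousOn.integrableOn_compact (isCompact_uIcc.prod isCompact_uIcc))
  have hR : (((∫ x in (0:ℝ)..l, G (x, 1)) - ∫ x in (0:ℝ)..l, G (x, 0)) +
      ∫ y in (0:ℝ)..1, F (l, y)) - ∫ y in (0:ℝ)..1, F (0, y) = 0 := by
    simp only [hG0, hG1]
    rw [intervalIntegral.integral_congr (g := fun y => F (0, y)) (fun y _ => hFper y)]
    simp
  rw [hR] at key
  have hprod : IntegrableOn (fun x => pd1 F x + pd2 G x) (Set.Ioc 0 l ×ˢ Set.Ioc (0:ℝ) 1) := by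
    have hbig : IntegrableOn (fun x => pd1 F x + pd2 G x)
        (Set.Icc (0:ℝ) l ×ˢ Set.Icc (0:ℝ) 1) :=
      hcont.continuousOn.integrableOn_compact ((isCompact_Icc).prod isCompact_Icc)
    exact hbig.mono_set (Set.prod_mono Set.Ioc_subset_Icc_self Set.Ioc_subset_Icc_self)
  rw [setIntegral_congr_set (domD_ae l)]
  have heq : ∫ x in Set.Ioc 0 l ×ˢ Set.Ioc (0:ℝ) 1, (pd1 F x + pd2 G x) =
      ∫ x in (0:ℝ)..l, ∫ y in (0:ℝ)..1, (pd1 F (x, y) + pd2 G (x, y)) := by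
    rw [intervalIntegral.integral_of_le hl.le]
    rw [Measure.volume_eq_prod] at hprod ⊢
    rw [setIntegral_prod _ hprod]
    congr 1
    ext x
    rw [intervalIntegral.integral_of_le zero_le_one]
  rw [heq]
  exact key

lemma dmul {a b : ℝ×ℝ→ℝ} {x w : ℝ×ℝ} (ha : DifferentiableAt ℝ a x) (hb : DifferentiableAt ℝ b x) :
    fderiv ℝ (fun y => a y * b y) x w = fderiv ℝ a x w * b x + a x * fderiv ℝ b x w := by
  rw [fderiv_fun_mul ha hb]
  simp [ContinuousLinearMap.add_apply, ContinuousLinearMap.smul_apply]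
  ring

lemma dadd {a b : ℝ×ℝ→ℝ} {x w : ℝ×ℝ} (ha : DifferentiableAt ℝ a x) (hb : DifferentiableAt ℝ b x) :
    fderiv ℝ (fun y => a y + b y) x w = fderiv ℝ a x w + fderiv ℝ b x w := by
  rw [fderiv_fun_add ha hb]; simp

lemma dsub {a b : ℝ×ℝ→ℝ} {x w : ℝ×ℝ} (ha : DifferentiableAt ℝ a x) (hb : DifferentiableAt ℝ b x) :
    fderiv ℝ (fun y => a y - b y) x w = fderiv ℝ a x w - fderiv ℝ b x w := by
  rw [fderiv_fun_sub ha hb]; simp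

lemma young_aux {x s : ℝ} (hx : 0 ≤ x) (hs : 0 ≤ s) : 16 * x^3 * s ≤ 16 * x^4 + 27 * s^4 := by
  nlinarith [sq_nonneg (2*x^2 - 2*x*s), sq_nonneg (x^2 - s^2), sq_nonneg (x*s - s^2),
    mul_nonneg hx hs, sq_nonneg (x*s), sq_nonneg (x+s), sq_nonneg (x-s),
    mul_nonneg (mul_nonneg hx hx) (mul_nonneg hs hs)]

lemma young (c₁ α A B P : ℝ) (hc : 0 < c₁) (hα : 0 < α) (hA : 0 ≤ A) (hB : 0 ≤ B)
    (hP : 0 ≤ P) :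
    Real.sqrt (c₁ * B * A) * P * A ≤ α * A^2 + 27 * c₁^2 / (16 * α^3) * (B^2 * P^4) := by
  set a := Real.sqrt A with ha
  set s := Real.sqrt (c₁ * B) * P with hsdef
  have ha0 : 0 ≤ a := Real.sqrt_nonneg _
  have hs0 : 0 ≤ s := mul_nonneg (Real.sqrt_nonneg _) hP
  have haA : a^2 = A := Real.sq_sqrt hA
  have hs2 : s^2 = c₁ * B * P^2 := by
    rw [hsdef, mul_pow, Real.sq_sqrt (by positivity)]
  have hL : Real.sqrt (c₁ * B * A) * P * A = s * a^3 := by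
    rw [Real.sqrt_mul (by positivity), hsdef, ← haA, Real.sqrt_sq ha0]; ring
  rw [hL]
  have key := young_aux (mul_nonneg hα.le ha0) hs0
  have h4 : s^4 = c₁^2 * B^2 * P^4 := by
    have h : s^4 = (s^2)^2 := by ring
    rw [h, hs2]; ring
  have hα3 : (0:ℝ) < 16 * α^3 := by positivity
  rw [← haA]
  calc s * a^3 = 16*α^3*(s*a^3) / (16*α^3) := by field_simp
    _ ≤ (16*α^4*a^4 + 27*s^4) / (16*α^3) := by
        rw [div_le_div_iff₀ hα3 hα3]
        nlinarith [key]
    _ = α*(a^2)^2 + 27*c₁^2/(16*α^3)*(B^2*P^4) := by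
        rw [h4]; field_simp

lemma cs2sq (p1 p2 w1 w2 : ℝ) : (p1*w1 + p2*w2)^2 ≤ (p1^2+p2^2)*(w1^2+w2^2) := by
  nlinarith [sq_nonneg (p1*w2 - p2*w1)]

lemma ptwise (p1 p2 w11 w12 w21 w22 w31 w32 q1 q2 q3 : ℝ) :
    |(p1*w11 + p2*w12)*q1 + (p1*w21 + p2*w22)*q2 + (p1*w31 + p2*w32)*q3| ≤
      (Real.sqrt (p1^2+p2^2) * Real.sqrt (q1^2+q2^2+q3^2)) *
        Real.sqrt (w11^2+w12^2+w21^2+w22^2+w31^2+w32^2) := by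
  have key : ∀ b1 b2 b3 : ℝ, b1^2+b2^2+b3^2 = q1^2+q2^2+q3^2 →
      (p1*w11 + p2*w12)*b1 + (p1*w21 + p2*w22)*b2 + (p1*w31 + p2*w32)*b3 ≤
      (Real.sqrt (p1^2+p2^2) * Real.sqrt (q1^2+q2^2+q3^2)) *
        Real.sqrt (w11^2+w12^2+w21^2+w22^2+w31^2+w32^2) := by
    intro b1 b2 b3 hb
    calc _ ≤ Real.sqrt ((p1*w11 + p2*w12)^2 + (p1*w21 + p2*w22)^2 + (p1*w31 + p2*w32)^2)
            * Real.sqrt (b1^2+b2^2+b3^2) := cs3 _ _ _ _ _ _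
    _ ≤ _ := by
        rw [hb]
        rw [show (Real.sqrt (p1^2+p2^2) * Real.sqrt (q1^2+q2^2+q3^2)) *
            Real.sqrt (w11^2+w12^2+w21^2+w22^2+w31^2+w32^2)
          = (Real.sqrt (p1^2+p2^2) * Real.sqrt (w11^2+w12^2+w21^2+w22^2+w31^2+w32^2))
            * Real.sqrt (q1^2+q2^2+q3^2) by ring]
        apply mul_le_mul_of_nonneg_right _ (Real.sqrt_nonneg _)
        rw [← Real.sqrt_mul (by positivity)]
        apply Real.sqrt_le_sqrt
        nlinarith [cs2sq p1 p2 w11 w12, cs2sq p1 p2 w21 w22, cs2sq p1 p2 w31 w32,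
          sq_nonneg p1, sq_nonneg p2]
  rw [abs_le]
  constructor
  · have h := key (-q1) (-q2) (-q3) (by ring)
    linarith
  · exact key q1 q2 q3 rfl

-- shape lemmas for derivatives (to be inserted before main_aux)
lemma dS {p q r : ℝ×ℝ→ℝ} {x w : ℝ×ℝ} (hp : DifferentiableAt ℝ p x)
    (hq : DifferentiableAt ℝ q x) (hr : DifferentiableAt ℝ r x) :
    fderiv ℝ (fun y => p y * p y + q y * q y + r y * r y) x w
      = 2 * p x * fderiv ℝ p x w + 2 * q x * fderiv ℝ q x w + 2 * r x * fderiv ℝ r x w := by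
  rw [dadd ((hp.fun_mul hp).fun_add (hq.fun_mul hq)) (hr.fun_mul hr), dadd (hp.fun_mul hp) (hq.fun_mul hq),
    dmul hp hp, dmul hq hq, dmul hr hr]
  ring

lemma dT {p q r a b c : ℝ×ℝ→ℝ} {x w : ℝ×ℝ} (hp : DifferentiableAt ℝ p x)
    (hq : DifferentiableAt ℝ q x) (hr : DifferentiableAt ℝ r x)
    (ha : DifferentiableAt ℝ a x) (hb : DifferentiableAt ℝ b x) (hc : DifferentiableAt ℝ c x) :
    fderiv ℝ (fun y => p y * a y + q y * b y + r y * c y) x w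
      = fderiv ℝ p x w * a x + p x * fderiv ℝ a x w + fderiv ℝ q x w * b x + q x * fderiv ℝ b x w
        + fderiv ℝ r x w * c x + r x * fderiv ℝ c x w := by
  rw [dadd ((hp.fun_mul ha).fun_add (hq.fun_mul hb)) (hr.fun_mul hc), dadd (hp.fun_mul ha) (hq.fun_mul hb),
    dmul hp ha, dmul hq hb, dmul hr hc]
  ring


/-- Final analytic bound, for abstract continuous component functions. -/
lemma final_bound (c₁ : ℝ) (hc₁ : 0 < c₁) (l : ℝ) (hl : 0 < l)
    (U1 U2 W11 W12 W21 W22 W31 W32 q1 q2 q3 FG : ℝ × ℝ → ℝ)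
    (cU1 : Continuous U1) (cU2 : Continuous U2)
    (cW11 : Continuous W11) (cW12 : Continuous W12) (cW21 : Continuous W21)
    (cW22 : Continuous W22) (cW31 : Continuous W31) (cW32 : Continuous W32)
    (cq1 : Continuous q1) (cq2 : Continuous q2) (cq3 : Continuous q3) (cFG : Continuous FG)
    (h4U : ((∫ x in domD l, (U1 x ^ 2 + U2 x ^ 2) ^ 2) ^ ((1:ℝ)/4)) ^ 2
      ≤ c₁ * Real.sqrt (∫ x in domD l, (U1 x ^ 2 + U2 x ^ 2))
          * Real.sqrt (∫ x in domD l, (W11 x ^ 2 + W12 x ^ 2 + W21 x ^ 2 + W22 x ^ 2)))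
    (α : ℝ) (hα : 0 < α) :
    |∫ x in domD l, ((U1 x * W11 x + U2 x * W12 x) * q1 x
        + (U1 x * W21 x + U2 x * W22 x) * q2 x
        + (U1 x * W31 x + U2 x * W32 x) * q3 x)|
    ≤ α * ((Real.sqrt (∫ x in domD l, (W11 x ^ 2 + W12 x ^ 2 + W21 x ^ 2 + W22 x ^ 2))) ^ 2
          + (Real.sqrt (∫ x in domD l, (W31 x ^ 2 + W32 x ^ 2))) ^ 2)
      + 27 * c₁ ^ 2 / (16 * α ^ 3)
        * ((Real.sqrt (∫ x in domD l, (U1 x ^ 2 + U2 x ^ 2))) ^ 2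
            + (Real.sqrt (∫ x in domD l, FG x ^ 2)) ^ 2)
        * (∫ x in domD l, (q1 x ^ 2 + q2 x ^ 2 + q3 x ^ 2) ^ 2) := by
  set X := ∫ x in domD l, (W11 x ^ 2 + W12 x ^ 2 + W21 x ^ 2 + W22 x ^ 2) with hXdef
  set Y := ∫ x in domD l, (W31 x ^ 2 + W32 x ^ 2) with hYdef
  set Bu := ∫ x in domD l, (U1 x ^ 2 + U2 x ^ 2) with hBudef
  set Bθ := ∫ x in domD l, FG x ^ 2 with hBθdef
  set QU := ∫ x in domD l, (U1 x ^ 2 + U2 x ^ 2) ^ 2 with hQUdef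
  set Qψ := ∫ x in domD l, (q1 x ^ 2 + q2 x ^ 2 + q3 x ^ 2) ^ 2 with hQψdef
  have hXnn : 0 ≤ X := integral_nonneg (fun x => by positivity)
  have hYnn : 0 ≤ Y := integral_nonneg (fun x => by positivity)
  have hBunn : 0 ≤ Bu := integral_nonneg (fun x => by positivity)
  have hBθnn : 0 ≤ Bθ := integral_nonneg (fun x => by positivity)
  have hQUnn : 0 ≤ QU := integral_nonneg (fun x => by positivity)
  have hQψnn : 0 ≤ Qψ := integral_nonneg (fun x => by positivity)
  rw [Real.sq_sqrt hXnn, Real.sq_sqrt hYnn, Real.sq_sqrt hBunn, Real.sq_sqrt hBθnn]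
  have hq4 : ∀ q : ℝ, 0 ≤ q → Real.sqrt (Real.sqrt q) = q ^ ((1:ℝ)/4) := by
    intro q hq
    rw [Real.sqrt_eq_rpow q, Real.sqrt_eq_rpow (q ^ ((1:ℝ)/2)), ← Real.rpow_mul hq]
    norm_num
  -- step 1 : pointwise bound
  have step1 : |∫ x in domD l, ((U1 x * W11 x + U2 x * W12 x) * q1 x
        + (U1 x * W21 x + U2 x * W22 x) * q2 x
        + (U1 x * W31 x + U2 x * W32 x) * q3 x)|
      ≤ ∫ x in domD l, ((Real.sqrt (U1 x ^ 2 + U2 x ^ 2)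
          * Real.sqrt (q1 x ^ 2 + q2 x ^ 2 + q3 x ^ 2))
          * Real.sqrt (W11 x ^ 2 + W12 x ^ 2 + W21 x ^ 2 + W22 x ^ 2 + W31 x ^ 2 + W32 x ^ 2)) := by
    have habs : |∫ x in domD l, ((U1 x * W11 x + U2 x * W12 x) * q1 x
        + (U1 x * W21 x + U2 x * W22 x) * q2 x
        + (U1 x * W31 x + U2 x * W32 x) * q3 x)|
        ≤ ∫ x in domD l, |(U1 x * W11 x + U2 x * W12 x) * q1 x
        + (U1 x * W21 x + U2 x * W22 x) * q2 x
        + (U1 x * W31 x + U2 x * W32 x) * q3 x| := by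
      simpa [Real.norm_eq_abs] using norm_integral_le_integral_norm
        (μ := volume.restrict (domD l)) (f := fun x => ((U1 x * W11 x + U2 x * W12 x) * q1 x
        + (U1 x * W21 x + U2 x * W22 x) * q2 x
        + (U1 x * W31 x + U2 x * W32 x) * q3 x))
    refine habs.trans ?_
    refine integral_mono (intgOn (by fun_prop)).abs (intgOn (by fun_prop)) ?_
    intro x
    exact ptwise (U1 x) (U2 x) (W11 x) (W12 x) (W21 x) (W22 x) (W31 x) (W32 x)
      (q1 x) (q2 x) (q3 x)
  -- step 2 : Cauchy-Schwarz
  have step2 : (∫ x in domD l, ((Real.sqrt (U1 x ^ 2 + U2 x ^ 2)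
          * Real.sqrt (q1 x ^ 2 + q2 x ^ 2 + q3 x ^ 2))
          * Real.sqrt (W11 x ^ 2 + W12 x ^ 2 + W21 x ^ 2 + W22 x ^ 2 + W31 x ^ 2 + W32 x ^ 2)))
      ≤ Real.sqrt (∫ x in domD l, (Real.sqrt (U1 x ^ 2 + U2 x ^ 2)
          * Real.sqrt (q1 x ^ 2 + q2 x ^ 2 + q3 x ^ 2)) ^ 2)
        * Real.sqrt (∫ x in domD l,
            (Real.sqrt (W11 x ^ 2 + W12 x ^ 2 + W21 x ^ 2 + W22 x ^ 2 + W31 x ^ 2 + W32 x ^ 2)) ^ 2) :=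
    csInt (by fun_prop) (by fun_prop)
      (fun x => mul_nonneg (Real.sqrt_nonneg _) (Real.sqrt_nonneg _))
      (fun x => Real.sqrt_nonneg _)
  have e1 : (∫ x in domD l, (Real.sqrt (U1 x ^ 2 + U2 x ^ 2)
        * Real.sqrt (q1 x ^ 2 + q2 x ^ 2 + q3 x ^ 2)) ^ 2)
      = ∫ x in domD l, ((U1 x ^ 2 + U2 x ^ 2) * (q1 x ^ 2 + q2 x ^ 2 + q3 x ^ 2)) :=
    integral_congr_ae (Filter.Eventually.of_forall (fun x => by
      simp only []
      rw [mul_pow, Real.sq_sqrt (by positivity), Real.sq_sqrt (by positivity)]))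
  have e2 : (∫ x in domD l,
        (Real.sqrt (W11 x ^ 2 + W12 x ^ 2 + W21 x ^ 2 + W22 x ^ 2 + W31 x ^ 2 + W32 x ^ 2)) ^ 2)
      = X + Y := by
    rw [show (∫ x in domD l,
        (Real.sqrt (W11 x ^ 2 + W12 x ^ 2 + W21 x ^ 2 + W22 x ^ 2 + W31 x ^ 2 + W32 x ^ 2)) ^ 2)
      = ∫ x in domD l, ((W11 x ^ 2 + W12 x ^ 2 + W21 x ^ 2 + W22 x ^ 2) + (W31 x ^ 2 + W32 x ^ 2))
      from integral_congr_ae (Filter.Eventually.of_forall (fun x => by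
        simp only []
        rw [Real.sq_sqrt (by positivity)]; ring))]
    rw [hXdef, hYdef]
    exact integral_add (intgOn (by fun_prop)) (intgOn (by fun_prop))
  have step3 : (∫ x in domD l, ((U1 x ^ 2 + U2 x ^ 2) * (q1 x ^ 2 + q2 x ^ 2 + q3 x ^ 2)))
      ≤ Real.sqrt QU * Real.sqrt Qψ := by
    rw [hQUdef, hQψdef]
    exact csInt (by fun_prop) (by fun_prop) (fun x => by positivity) (fun x => by positivity)
  -- assemble
  have hKnn : 0 ≤ QU ^ ((1:ℝ)/4) := Real.rpow_nonneg hQUnn _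
  have hPnn : 0 ≤ Qψ ^ ((1:ℝ)/4) := Real.rpow_nonneg hQψnn _
  have hK : QU ^ ((1:ℝ)/4) ≤ Real.sqrt (c₁ * Real.sqrt (Bu + Bθ) * Real.sqrt (X + Y)) := by
    have h2 : c₁ * Real.sqrt Bu * Real.sqrt X
        ≤ c₁ * Real.sqrt (Bu + Bθ) * Real.sqrt (X + Y) := by
      gcongr <;> linarith
    calc QU ^ ((1:ℝ)/4) = Real.sqrt ((QU ^ ((1:ℝ)/4)) ^ 2) := (Real.sqrt_sq hKnn).symm
      _ ≤ _ := Real.sqrt_le_sqrt (h4U.trans h2)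
  have hP4 : (Qψ ^ ((1:ℝ)/4)) ^ (4:ℕ) = Qψ := by
    rw [← Real.rpow_natCast (Qψ ^ ((1:ℝ)/4)) 4, ← Real.rpow_mul hQψnn]
    norm_num
  have hA2 : (Real.sqrt (X + Y)) ^ 2 = X + Y := Real.sq_sqrt (by linarith)
  have hB2 : (Real.sqrt (Bu + Bθ)) ^ 2 = Bu + Bθ := Real.sq_sqrt (by linarith)
  calc |∫ x in domD l, ((U1 x * W11 x + U2 x * W12 x) * q1 x
        + (U1 x * W21 x + U2 x * W22 x) * q2 x
        + (U1 x * W31 x + U2 x * W32 x) * q3 x)|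
      ≤ Real.sqrt (∫ x in domD l, (Real.sqrt (U1 x ^ 2 + U2 x ^ 2)
          * Real.sqrt (q1 x ^ 2 + q2 x ^ 2 + q3 x ^ 2)) ^ 2)
        * Real.sqrt (∫ x in domD l,
            (Real.sqrt (W11 x ^ 2 + W12 x ^ 2 + W21 x ^ 2 + W22 x ^ 2 + W31 x ^ 2 + W32 x ^ 2)) ^ 2) :=
        step1.trans step2
    _ = Real.sqrt (∫ x in domD l, ((U1 x ^ 2 + U2 x ^ 2) * (q1 x ^ 2 + q2 x ^ 2 + q3 x ^ 2)))
        * Real.sqrt (X + Y) := by rw [e1, e2]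
    _ ≤ Real.sqrt (Real.sqrt QU * Real.sqrt Qψ) * Real.sqrt (X + Y) :=
        mul_le_mul_of_nonneg_right (Real.sqrt_le_sqrt step3) (Real.sqrt_nonneg _)
    _ = (QU ^ ((1:ℝ)/4) * Qψ ^ ((1:ℝ)/4)) * Real.sqrt (X + Y) := by
        rw [Real.sqrt_mul (Real.sqrt_nonneg _), hq4 QU hQUnn, hq4 Qψ hQψnn]
    _ ≤ (Real.sqrt (c₁ * Real.sqrt (Bu + Bθ) * Real.sqrt (X + Y)) * Qψ ^ ((1:ℝ)/4))
        * Real.sqrt (X + Y) := by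
        gcongr
    _ ≤ α * (Real.sqrt (X + Y)) ^ 2 + 27 * c₁ ^ 2 / (16 * α ^ 3)
          * ((Real.sqrt (Bu + Bθ)) ^ 2 * (Qψ ^ ((1:ℝ)/4)) ^ 4) :=
        young c₁ α (Real.sqrt (X + Y)) (Real.sqrt (Bu + Bθ)) (Qψ ^ ((1:ℝ)/4)) hc₁ hα
          (Real.sqrt_nonneg _) (Real.sqrt_nonneg _) hPnn
    _ = α * (X + Y) + 27 * c₁ ^ 2 / (16 * α ^ 3) * ((Bu + Bθ) * Qψ) := by
        rw [hA2, hB2, hP4]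
    _ = α * (X + Y) + 27 * c₁ ^ 2 / (16 * α ^ 3) * (Bu + Bθ) * Qψ := by ring

/-- Main auxiliary estimate, stated in terms of scalar component functions. -/
lemma main_aux (c₁ : ℝ) (hc₁ : 0 < c₁) (l : ℝ) (hl : 0 < l)
    (u1 u2 v1 v2 f g : ℝ × ℝ → ℝ)
    (hu1 : ContDiff ℝ 1 u1) (hu2 : ContDiff ℝ 1 u2) (hv1 : ContDiff ℝ 1 v1)
    (hv2 : ContDiff ℝ 1 v2) (hf : ContDiff ℝ 1 f) (hg : ContDiff ℝ 1 g)
    (pu1 : ∀ x₁ x₂ : ℝ, u1 (x₁ + l, x₂) = u1 (x₁, x₂))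
    (pu2 : ∀ x₁ x₂ : ℝ, u2 (x₁ + l, x₂) = u2 (x₁, x₂))
    (pv1 : ∀ x₁ x₂ : ℝ, v1 (x₁ + l, x₂) = v1 (x₁, x₂))
    (pv2 : ∀ x₁ x₂ : ℝ, v2 (x₁ + l, x₂) = v2 (x₁, x₂))
    (pf : ∀ x₁ x₂ : ℝ, f (x₁ + l, x₂) = f (x₁, x₂))
    (pg : ∀ x₁ x₂ : ℝ, g (x₁ + l, x₂) = g (x₁, x₂))
    (bu2₀ : ∀ t : ℝ, u2 (t, 0) = 0) (bu2₁ : ∀ t : ℝ, u2 (t, 1) = 0)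
    (bv2₀ : ∀ t : ℝ, v2 (t, 0) = 0) (bv2₁ : ∀ t : ℝ, v2 (t, 1) = 0)
    (du : ∀ x : ℝ × ℝ, pd1 u1 x + pd2 u2 x = 0)
    (dv : ∀ x : ℝ × ℝ, pd1 v1 x + pd2 v2 x = 0)
    (h4U : ((∫ x in domD l, ((u1 x - v1 x)^2 + (u2 x - v2 x)^2)^2) ^ ((1:ℝ)/4))^2
      ≤ c₁ * Real.sqrt (∫ x in domD l, ((u1 x - v1 x)^2 + (u2 x - v2 x)^2))
          * Real.sqrt (∫ x in domD l,
            (pd1 (fun y => u1 y - v1 y) x ^ 2 + pd2 (fun y => u1 y - v1 y) x ^ 2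
              + pd1 (fun y => u2 y - v2 y) x ^ 2 + pd2 (fun y => u2 y - v2 y) x ^ 2)))
    (α : ℝ) (hα : 0 < α) :
    |(∫ x in domD l,
        (u1 x * pd1 u1 x * (u1 x - v1 x) + u1 x * pd1 u2 x * (u2 x - v2 x)
          + u2 x * pd2 u1 x * (u1 x - v1 x) + u2 x * pd2 u2 x * (u2 x - v2 x)))
      - (∫ x in domD l,
        (v1 x * pd1 v1 x * (u1 x - v1 x) + v1 x * pd1 v2 x * (u2 x - v2 x)
          + v2 x * pd2 v1 x * (u1 x - v1 x) + v2 x * pd2 v2 x * (u2 x - v2 x)))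
      + (∫ x in domD l, (u1 x * pd1 f x * (f x - g x) + u2 x * pd2 f x * (f x - g x)))
      - (∫ x in domD l, (v1 x * pd1 g x * (f x - g x) + v2 x * pd2 g x * (f x - g x)))|
    ≤ α * ((Real.sqrt (∫ x in domD l,
            (pd1 (fun y => u1 y - v1 y) x ^ 2 + pd2 (fun y => u1 y - v1 y) x ^ 2
              + pd1 (fun y => u2 y - v2 y) x ^ 2 + pd2 (fun y => u2 y - v2 y) x ^ 2)))^2
          + (Real.sqrt (∫ x in domD l,
              (pd1 (fun y => f y - g y) x ^ 2 + pd2 (fun y => f y - g y) x ^ 2)))^2)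
      + 27 * c₁ ^ 2 / (16 * α ^ 3)
        * ((Real.sqrt (∫ x in domD l, ((u1 x - v1 x)^2 + (u2 x - v2 x)^2)))^2
            + (Real.sqrt (∫ x in domD l, (f x - g x)^2))^2)
        * (∫ x in domD l, (v1 x ^ 2 + v2 x ^ 2 + g x ^ 2) ^ 2) := by
  -- continuity and differentiability facts
  have hU1c : ContDiff ℝ 1 (fun y => u1 y - v1 y) := hu1.sub hv1
  have hU2c : ContDiff ℝ 1 (fun y => u2 y - v2 y) := hu2.sub hv2
  have hFGc : ContDiff ℝ 1 (fun y => f y - g y) := hf.sub hg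
  have c_u1 : Continuous u1 := hu1.continuous
  have c_u2 : Continuous u2 := hu2.continuous
  have c_v1 : Continuous v1 := hv1.continuous
  have c_v2 : Continuous v2 := hv2.continuous
  have c_f : Continuous f := hf.continuous
  have c_g : Continuous g := hg.continuous
  have c_p1u1 : Continuous (pd1 u1) := (pd_cont hu1).1
  have c_p2u1 : Continuous (pd2 u1) := (pd_cont hu1).2
  have c_p1u2 : Continuous (pd1 u2) := (pd_cont hu2).1
  have c_p2u2 : Continuous (pd2 u2) := (pd_cont hu2).2
  have c_p1v1 : Continuous (pd1 v1) := (pd_cont hv1).1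
  have c_p2v1 : Continuous (pd2 v1) := (pd_cont hv1).2
  have c_p1v2 : Continuous (pd1 v2) := (pd_cont hv2).1
  have c_p2v2 : Continuous (pd2 v2) := (pd_cont hv2).2
  have c_p1f : Continuous (pd1 f) := (pd_cont hf).1
  have c_p2f : Continuous (pd2 f) := (pd_cont hf).2
  have c_p1g : Continuous (pd1 g) := (pd_cont hg).1
  have c_p2g : Continuous (pd2 g) := (pd_cont hg).2
  have c_p1U1 : Continuous (pd1 (fun y => u1 y - v1 y)) := (pd_cont hU1c).1
  have c_p2U1 : Continuous (pd2 (fun y => u1 y - v1 y)) := (pd_cont hU1c).2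
  have c_p1U2 : Continuous (pd1 (fun y => u2 y - v2 y)) := (pd_cont hU2c).1
  have c_p2U2 : Continuous (pd2 (fun y => u2 y - v2 y)) := (pd_cont hU2c).2
  have c_p1FG : Continuous (pd1 (fun y => f y - g y)) := (pd_cont hFGc).1
  have c_p2FG : Continuous (pd2 (fun y => f y - g y)) := (pd_cont hFGc).2
  have d_u1 : ∀ x, DifferentiableAt ℝ u1 x := fun x => (hu1.differentiable one_ne_zero) x
  have d_u2 : ∀ x, DifferentiableAt ℝ u2 x := fun x => (hu2.differentiable one_ne_zero) x
  have d_v1 : ∀ x, DifferentiableAt ℝ v1 x := fun x => (hv1.differentiable one_ne_zero) x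
  have d_v2 : ∀ x, DifferentiableAt ℝ v2 x := fun x => (hv2.differentiable one_ne_zero) x
  have d_f : ∀ x, DifferentiableAt ℝ f x := fun x => (hf.differentiable one_ne_zero) x
  have d_g : ∀ x, DifferentiableAt ℝ g x := fun x => (hg.differentiable one_ne_zero) x
  have dU1 : ∀ x, DifferentiableAt ℝ (fun y => u1 y - v1 y) x :=
    fun x => (hU1c.differentiable one_ne_zero) x
  have dU2 : ∀ x, DifferentiableAt ℝ (fun y => u2 y - v2 y) x :=
    fun x => (hU2c.differentiable one_ne_zero) x
  have dFG : ∀ x, DifferentiableAt ℝ (fun y => f y - g y) x :=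
    fun x => (hFGc.differentiable one_ne_zero) x
  have du' : ∀ x : ℝ × ℝ, fderiv ℝ u1 x (1,0) + fderiv ℝ u2 x (0,1) = 0 := du
  have dv' : ∀ x : ℝ × ℝ, fderiv ℝ v1 x (1,0) + fderiv ℝ v2 x (0,1) = 0 := dv
  -- periodicity at x₁ = l
  have eu1 : ∀ y : ℝ, u1 (l, y) = u1 (0, y) := fun y => by simpa using pu1 0 y
  have eu2 : ∀ y : ℝ, u2 (l, y) = u2 (0, y) := fun y => by simpa using pu2 0 y
  have ev1 : ∀ y : ℝ, v1 (l, y) = v1 (0, y) := fun y => by simpa using pv1 0 y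
  have ev2 : ∀ y : ℝ, v2 (l, y) = v2 (0, y) := fun y => by simpa using pv2 0 y
  have ef : ∀ y : ℝ, f (l, y) = f (0, y) := fun y => by simpa using pf 0 y
  have eg : ∀ y : ℝ, g (l, y) = g (0, y) := fun y => by simpa using pg 0 y
  -- integrability of the B-integrands
  have iB1u : IntegrableOn (fun x => u1 x * pd1 u1 x * (u1 x - v1 x) + u1 x * pd1 u2 x * (u2 x - v2 x) + u2 x * pd2 u1 x * (u1 x - v1 x) + u2 x * pd2 u2 x * (u2 x - v2 x)) (domD l) := intgOn (by fun_prop)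
  have iB1v : IntegrableOn (fun x => v1 x * pd1 v1 x * (u1 x - v1 x) + v1 x * pd1 v2 x * (u2 x - v2 x) + v2 x * pd2 v1 x * (u1 x - v1 x) + v2 x * pd2 v2 x * (u2 x - v2 x)) (domD l) := intgOn (by fun_prop)
  have iB2u : IntegrableOn (fun x => u1 x * pd1 f x * (f x - g x) + u2 x * pd2 f x * (f x - g x)) (domD l) := intgOn (by fun_prop)
  have iB2v : IntegrableOn (fun x => v1 x * pd1 g x * (f x - g x) + v2 x * pd2 g x * (f x - g x)) (domD l) := intgOn (by fun_prop)
  have iI1 : IntegrableOn (fun x => (u1 x - v1 x) * pd1 v1 x * (u1 x - v1 x) + (u1 x - v1 x) * pd1 v2 x * (u2 x - v2 x) + (u2 x - v2 x) * pd2 v1 x * (u1 x - v1 x) + (u2 x - v2 x) * pd2 v2 x * (u2 x - v2 x) + (u1 x - v1 x) * pd1 g x * (f x - g x) + (u2 x - v2 x) * pd2 g x * (f x - g x)) (domD l) := intgOn (by fun_prop)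
  have iI2 : IntegrableOn (fun x => u1 x * pd1 (fun y => u1 y - v1 y) x * (u1 x - v1 x) + u1 x * pd1 (fun y => u2 y - v2 y) x * (u2 x - v2 x) + u2 x * pd2 (fun y => u1 y - v1 y) x * (u1 x - v1 x) + u2 x * pd2 (fun y => u2 y - v2 y) x * (u2 x - v2 x) + u1 x * pd1 (fun y => f y - g y) x * (f x - g x) + u2 x * pd2 (fun y => f y - g y) x * (f x - g x)) (domD l) := intgOn (by fun_prop)
  have iJ : IntegrableOn (fun x => ((u1 x - v1 x) * pd1 (fun y => u1 y - v1 y) x + (u2 x - v2 x) * pd2 (fun y => u1 y - v1 y) x) * v1 x + ((u1 x - v1 x) * pd1 (fun y => u2 y - v2 y) x + (u2 x - v2 x) * pd2 (fun y => u2 y - v2 y) x) * v2 x + ((u1 x - v1 x) * pd1 (fun y => f y - g y) x + (u2 x - v2 x) * pd2 (fun y => f y - g y) x) * g x) (domD l) := intgOn (by fun_prop)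
  -- splitting identity
  have hsplit : (∫ x in domD l, (u1 x * pd1 u1 x * (u1 x - v1 x) + u1 x * pd1 u2 x * (u2 x - v2 x) + u2 x * pd2 u1 x * (u1 x - v1 x) + u2 x * pd2 u2 x * (u2 x - v2 x)))
      - (∫ x in domD l, (v1 x * pd1 v1 x * (u1 x - v1 x) + v1 x * pd1 v2 x * (u2 x - v2 x) + v2 x * pd2 v1 x * (u1 x - v1 x) + v2 x * pd2 v2 x * (u2 x - v2 x)))
      + (∫ x in domD l, (u1 x * pd1 f x * (f x - g x) + u2 x * pd2 f x * (f x - g x)))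
      - (∫ x in domD l, (v1 x * pd1 g x * (f x - g x) + v2 x * pd2 g x * (f x - g x)))
      = (∫ x in domD l, ((u1 x - v1 x) * pd1 v1 x * (u1 x - v1 x) + (u1 x - v1 x) * pd1 v2 x * (u2 x - v2 x) + (u2 x - v2 x) * pd2 v1 x * (u1 x - v1 x) + (u2 x - v2 x) * pd2 v2 x * (u2 x - v2 x) + (u1 x - v1 x) * pd1 g x * (f x - g x) + (u2 x - v2 x) * pd2 g x * (f x - g x)))
        + (∫ x in domD l, (u1 x * pd1 (fun y => u1 y - v1 y) x * (u1 x - v1 x) + u1 x * pd1 (fun y => u2 y - v2 y) x * (u2 x - v2 x) + u2 x * pd2 (fun y => u1 y - v1 y) x * (u1 x - v1 x) + u2 x * pd2 (fun y => u2 y - v2 y) x * (u2 x - v2 x) + u1 x * pd1 (fun y => f y - g y) x * (f x - g x) + u2 x * pd2 (fun y => f y - g y) x * (f x - g x))) := by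
    have s1 : ∫ x in domD l, ((u1 x * pd1 u1 x * (u1 x - v1 x) + u1 x * pd1 u2 x * (u2 x - v2 x) + u2 x * pd2 u1 x * (u1 x - v1 x) + u2 x * pd2 u2 x * (u2 x - v2 x)) - (v1 x * pd1 v1 x * (u1 x - v1 x) + v1 x * pd1 v2 x * (u2 x - v2 x) + v2 x * pd2 v1 x * (u1 x - v1 x) + v2 x * pd2 v2 x * (u2 x - v2 x)))
        = (∫ x in domD l, (u1 x * pd1 u1 x * (u1 x - v1 x) + u1 x * pd1 u2 x * (u2 x - v2 x) + u2 x * pd2 u1 x * (u1 x - v1 x) + u2 x * pd2 u2 x * (u2 x - v2 x))) - ∫ x in domD l, (v1 x * pd1 v1 x * (u1 x - v1 x) + v1 x * pd1 v2 x * (u2 x - v2 x) + v2 x * pd2 v1 x * (u1 x - v1 x) + v2 x * pd2 v2 x * (u2 x - v2 x)) := integral_sub iB1u iB1v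
    have s2 : ∫ x in domD l, (((u1 x * pd1 u1 x * (u1 x - v1 x) + u1 x * pd1 u2 x * (u2 x - v2 x) + u2 x * pd2 u1 x * (u1 x - v1 x) + u2 x * pd2 u2 x * (u2 x - v2 x)) - (v1 x * pd1 v1 x * (u1 x - v1 x) + v1 x * pd1 v2 x * (u2 x - v2 x) + v2 x * pd2 v1 x * (u1 x - v1 x) + v2 x * pd2 v2 x * (u2 x - v2 x))) + (u1 x * pd1 f x * (f x - g x) + u2 x * pd2 f x * (f x - g x)))
        = (∫ x in domD l, ((u1 x * pd1 u1 x * (u1 x - v1 x) + u1 x * pd1 u2 x * (u2 x - v2 x) + u2 x * pd2 u1 x * (u1 x - v1 x) + u2 x * pd2 u2 x * (u2 x - v2 x)) - (v1 x * pd1 v1 x * (u1 x - v1 x) + v1 x * pd1 v2 x * (u2 x - v2 x) + v2 x * pd2 v1 x * (u1 x - v1 x) + v2 x * pd2 v2 x * (u2 x - v2 x)))) + ∫ x in domD l, (u1 x * pd1 f x * (f x - g x) + u2 x * pd2 f x * (f x - g x)) :=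
      integral_add (iB1u.sub iB1v) iB2u
    have s3 : ∫ x in domD l, ((((u1 x * pd1 u1 x * (u1 x - v1 x) + u1 x * pd1 u2 x * (u2 x - v2 x) + u2 x * pd2 u1 x * (u1 x - v1 x) + u2 x * pd2 u2 x * (u2 x - v2 x)) - (v1 x * pd1 v1 x * (u1 x - v1 x) + v1 x * pd1 v2 x * (u2 x - v2 x) + v2 x * pd2 v1 x * (u1 x - v1 x) + v2 x * pd2 v2 x * (u2 x - v2 x))) + (u1 x * pd1 f x * (f x - g x) + u2 x * pd2 f x * (f x - g x))) - (v1 x * pd1 g x * (f x - g x) + v2 x * pd2 g x * (f x - g x)))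
        = (∫ x in domD l, (((u1 x * pd1 u1 x * (u1 x - v1 x) + u1 x * pd1 u2 x * (u2 x - v2 x) + u2 x * pd2 u1 x * (u1 x - v1 x) + u2 x * pd2 u2 x * (u2 x - v2 x)) - (v1 x * pd1 v1 x * (u1 x - v1 x) + v1 x * pd1 v2 x * (u2 x - v2 x) + v2 x * pd2 v1 x * (u1 x - v1 x) + v2 x * pd2 v2 x * (u2 x - v2 x))) + (u1 x * pd1 f x * (f x - g x) + u2 x * pd2 f x * (f x - g x)))) - ∫ x in domD l, (v1 x * pd1 g x * (f x - g x) + v2 x * pd2 g x * (f x - g x)) :=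
      integral_sub ((iB1u.sub iB1v).add iB2u) iB2v
    have s4 : ∫ x in domD l, (((u1 x - v1 x) * pd1 v1 x * (u1 x - v1 x) + (u1 x - v1 x) * pd1 v2 x * (u2 x - v2 x) + (u2 x - v2 x) * pd2 v1 x * (u1 x - v1 x) + (u2 x - v2 x) * pd2 v2 x * (u2 x - v2 x) + (u1 x - v1 x) * pd1 g x * (f x - g x) + (u2 x - v2 x) * pd2 g x * (f x - g x)) + (u1 x * pd1 (fun y => u1 y - v1 y) x * (u1 x - v1 x) + u1 x * pd1 (fun y => u2 y - v2 y) x * (u2 x - v2 x) + u2 x * pd2 (fun y => u1 y - v1 y) x * (u1 x - v1 x) + u2 x * pd2 (fun y => u2 y - v2 y) x * (u2 x - v2 x) + u1 x * pd1 (fun y => f y - g y) x * (f x - g x) + u2 x * pd2 (fun y => f y - g y) x * (f x - g x)))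
        = (∫ x in domD l, ((u1 x - v1 x) * pd1 v1 x * (u1 x - v1 x) + (u1 x - v1 x) * pd1 v2 x * (u2 x - v2 x) + (u2 x - v2 x) * pd2 v1 x * (u1 x - v1 x) + (u2 x - v2 x) * pd2 v2 x * (u2 x - v2 x) + (u1 x - v1 x) * pd1 g x * (f x - g x) + (u2 x - v2 x) * pd2 g x * (f x - g x))) + ∫ x in domD l, (u1 x * pd1 (fun y => u1 y - v1 y) x * (u1 x - v1 x) + u1 x * pd1 (fun y => u2 y - v2 y) x * (u2 x - v2 x) + u2 x * pd2 (fun y => u1 y - v1 y) x * (u1 x - v1 x) + u2 x * pd2 (fun y => u2 y - v2 y) x * (u2 x - v2 x) + u1 x * pd1 (fun y => f y - g y) x * (f x - g x) + u2 x * pd2 (fun y => f y - g y) x * (f x - g x)) := integral_add iI1 iI2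
    rw [← s1, ← s2, ← s3, ← s4]
    refine integral_congr_ae (Filter.Eventually.of_forall (fun x => ?_))
    simp only [pd1, pd2]
    simp only [dsub (d_u1 x) (d_v1 x), dsub (d_u2 x) (d_v2 x), dsub (d_f x) (d_g x)]
    ring
  -- first divergence-theorem identity : ∫ I2 = 0
  have hS1d : ∀ x, DifferentiableAt ℝ (fun y => (u1 y - v1 y) * (u1 y - v1 y) + (u2 y - v2 y) * (u2 y - v2 y) + (f y - g y) * (f y - g y)) x :=
    fun x => (((dU1 x).mul (dU1 x)).add ((dU2 x).mul (dU2 x))).add ((dFG x).mul (dFG x))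
  have hI2 : (∫ x in domD l, (u1 x * pd1 (fun y => u1 y - v1 y) x * (u1 x - v1 x) + u1 x * pd1 (fun y => u2 y - v2 y) x * (u2 x - v2 x) + u2 x * pd2 (fun y => u1 y - v1 y) x * (u1 x - v1 x) + u2 x * pd2 (fun y => u2 y - v2 y) x * (u2 x - v2 x) + u1 x * pd1 (fun y => f y - g y) x * (f x - g x) + u2 x * pd2 (fun y => f y - g y) x * (f x - g x))) = 0 := by
    have hdiv := div_thm hl (F := fun y => u1 y * ((u1 y - v1 y) * (u1 y - v1 y) + (u2 y - v2 y) * (u2 y - v2 y) + (f y - g y) * (f y - g y))) (G := fun y => u2 y * ((u1 y - v1 y) * (u1 y - v1 y) + (u2 y - v2 y) * (u2 y - v2 y) + (f y - g y) * (f y - g y)))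
      (hu1.mul ((hU1c.mul hU1c).add (hU2c.mul hU2c) |>.add (hFGc.mul hFGc)))
      (hu2.mul ((hU1c.mul hU1c).add (hU2c.mul hU2c) |>.add (hFGc.mul hFGc)))
      (fun y => by simp only [eu1, eu2, ev1, ev2, ef, eg])
      (fun t => by simp [bu2₀]) (fun t => by simp [bu2₁])
    have hpt : ∀ x : ℝ × ℝ, pd1 (fun y => u1 y * ((u1 y - v1 y) * (u1 y - v1 y) + (u2 y - v2 y) * (u2 y - v2 y) + (f y - g y) * (f y - g y))) x + pd2 (fun y => u2 y * ((u1 y - v1 y) * (u1 y - v1 y) + (u2 y - v2 y) * (u2 y - v2 y) + (f y - g y) * (f y - g y))) x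
        = 2 * (u1 x * pd1 (fun y => u1 y - v1 y) x * (u1 x - v1 x) + u1 x * pd1 (fun y => u2 y - v2 y) x * (u2 x - v2 x) + u2 x * pd2 (fun y => u1 y - v1 y) x * (u1 x - v1 x) + u2 x * pd2 (fun y => u2 y - v2 y) x * (u2 x - v2 x) + u1 x * pd1 (fun y => f y - g y) x * (f x - g x) + u2 x * pd2 (fun y => f y - g y) x * (f x - g x)) := by
      intro x
      simp only [pd1, pd2]
      rw [dmul (d_u1 x) (hS1d x), dmul (d_u2 x) (hS1d x),
        dS (dU1 x) (dU2 x) (dFG x), dS (dU1 x) (dU2 x) (dFG x)]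
      linear_combination ((u1 x - v1 x) * (u1 x - v1 x) + (u2 x - v2 x) * (u2 x - v2 x)
        + (f x - g x) * (f x - g x)) * du' x
    have e : (∫ x in domD l, (pd1 (fun y => u1 y * ((u1 y - v1 y) * (u1 y - v1 y) + (u2 y - v2 y) * (u2 y - v2 y) + (f y - g y) * (f y - g y))) x + pd2 (fun y => u2 y * ((u1 y - v1 y) * (u1 y - v1 y) + (u2 y - v2 y) * (u2 y - v2 y) + (f y - g y) * (f y - g y))) x))
        = ∫ x in domD l, (2 : ℝ) * (u1 x * pd1 (fun y => u1 y - v1 y) x * (u1 x - v1 x) + u1 x * pd1 (fun y => u2 y - v2 y) x * (u2 x - v2 x) + u2 x * pd2 (fun y => u1 y - v1 y) x * (u1 x - v1 x) + u2 x * pd2 (fun y => u2 y - v2 y) x * (u2 x - v2 x) + u1 x * pd1 (fun y => f y - g y) x * (f x - g x) + u2 x * pd2 (fun y => f y - g y) x * (f x - g x)) :=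
      integral_congr_ae (Filter.Eventually.of_forall hpt)
    have e2 : ∫ x in domD l, (2 : ℝ) * (u1 x * pd1 (fun y => u1 y - v1 y) x * (u1 x - v1 x) + u1 x * pd1 (fun y => u2 y - v2 y) x * (u2 x - v2 x) + u2 x * pd2 (fun y => u1 y - v1 y) x * (u1 x - v1 x) + u2 x * pd2 (fun y => u2 y - v2 y) x * (u2 x - v2 x) + u1 x * pd1 (fun y => f y - g y) x * (f x - g x) + u2 x * pd2 (fun y => f y - g y) x * (f x - g x))
        = 2 * ∫ x in domD l, (u1 x * pd1 (fun y => u1 y - v1 y) x * (u1 x - v1 x) + u1 x * pd1 (fun y => u2 y - v2 y) x * (u2 x - v2 x) + u2 x * pd2 (fun y => u1 y - v1 y) x * (u1 x - v1 x) + u2 x * pd2 (fun y => u2 y - v2 y) x * (u2 x - v2 x) + u1 x * pd1 (fun y => f y - g y) x * (f x - g x) + u2 x * pd2 (fun y => f y - g y) x * (f x - g x)) := integral_const_mul 2 _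
    rw [e, e2] at hdiv
    linarith
  -- second divergence-theorem identity : ∫ I1 = - ∫ J
  have hTd : ∀ x, DifferentiableAt ℝ (fun y => (u1 y - v1 y) * v1 y + (u2 y - v2 y) * v2 y + (f y - g y) * g y) x :=
    fun x => (((dU1 x).mul (d_v1 x)).add ((dU2 x).mul (d_v2 x))).add ((dFG x).mul (d_g x))
  have hI1 : (∫ x in domD l, ((u1 x - v1 x) * pd1 v1 x * (u1 x - v1 x) + (u1 x - v1 x) * pd1 v2 x * (u2 x - v2 x) + (u2 x - v2 x) * pd2 v1 x * (u1 x - v1 x) + (u2 x - v2 x) * pd2 v2 x * (u2 x - v2 x) + (u1 x - v1 x) * pd1 g x * (f x - g x) + (u2 x - v2 x) * pd2 g x * (f x - g x))) = - (∫ x in domD l, (((u1 x - v1 x) * pd1 (fun y => u1 y - v1 y) x + (u2 x - v2 x) * pd2 (fun y => u1 y - v1 y) x) * v1 x + ((u1 x - v1 x) * pd1 (fun y => u2 y - v2 y) x + (u2 x - v2 x) * pd2 (fun y => u2 y - v2 y) x) * v2 x + ((u1 x - v1 x) * pd1 (fun y => f y - g y) x + (u2 x - v2 x) * pd2 (fun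 y => f y - g y) x) * g x)) := by
    have hdiv := div_thm hl (F := fun y => (u1 y - v1 y) * ((u1 y - v1 y) * v1 y + (u2 y - v2 y) * v2 y + (f y - g y) * g y)) (G := fun y => (u2 y - v2 y) * ((u1 y - v1 y) * v1 y + (u2 y - v2 y) * v2 y + (f y - g y) * g y))
      (hU1c.mul ((hU1c.mul hv1).add (hU2c.mul hv2) |>.add (hFGc.mul hg)))
      (hU2c.mul ((hU1c.mul hv1).add (hU2c.mul hv2) |>.add (hFGc.mul hg)))
      (fun y => by simp only [eu1, eu2, ev1, ev2, ef, eg])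
      (fun t => by simp [bu2₀, bv2₀]) (fun t => by simp [bu2₁, bv2₁])
    have hpt : ∀ x : ℝ × ℝ, pd1 (fun y => (u1 y - v1 y) * ((u1 y - v1 y) * v1 y + (u2 y - v2 y) * v2 y + (f y - g y) * g y)) x + pd2 (fun y => (u2 y - v2 y) * ((u1 y - v1 y) * v1 y + (u2 y - v2 y) * v2 y + (f y - g y) * g y)) x
        = ((u1 x - v1 x) * pd1 v1 x * (u1 x - v1 x) + (u1 x - v1 x) * pd1 v2 x * (u2 x - v2 x) + (u2 x - v2 x) * pd2 v1 x * (u1 x - v1 x) + (u2 x - v2 x) * pd2 v2 x * (u2 x - v2 x) + (u1 x - v1 x) * pd1 g x * (f x - g x) + (u2 x - v2 x) * pd2 g x * (f x - g x)) + (((u1 x - v1 x) * pd1 (fun y => u1 y - v1 y) x + (u2 x - v2 x) * pd2 (fun y => u1 y - v1 y) x) * v1 x + ((u1 x - v1 x) * pd1 (fun y => u2 y - v2 y) x + (u2 x - v2 x) * pd2 (fun y => u2 y - v2 y) x) * v2 x + ((u1 x - v1 x) * pd1 (fun y => f y - g y) x + (u2 x - v2 x) * pd2 (fun y => f y - g y)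 x) * g x) := by
      intro x
      simp only [pd1, pd2]
      rw [dmul (dU1 x) (hTd x), dmul (dU2 x) (hTd x),
        dT (dU1 x) (dU2 x) (dFG x) (d_v1 x) (d_v2 x) (d_g x),
        dT (dU1 x) (dU2 x) (dFG x) (d_v1 x) (d_v2 x) (d_g x)]
      simp only [dsub (d_u1 x) (d_v1 x), dsub (d_u2 x) (d_v2 x), dsub (d_f x) (d_g x)]
      linear_combination ((u1 x - v1 x) * v1 x + (u2 x - v2 x) * v2 x + (f x - g x) * g x)
        * (du' x) - ((u1 x - v1 x) * v1 x + (u2 x - v2 x) * v2 x + (f x - g x) * g x) * (dv' x)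
    have e : (∫ x in domD l, (pd1 (fun y => (u1 y - v1 y) * ((u1 y - v1 y) * v1 y + (u2 y - v2 y) * v2 y + (f y - g y) * g y)) x + pd2 (fun y => (u2 y - v2 y) * ((u1 y - v1 y) * v1 y + (u2 y - v2 y) * v2 y + (f y - g y) * g y)) x))
        = ∫ x in domD l, (((u1 x - v1 x) * pd1 v1 x * (u1 x - v1 x) + (u1 x - v1 x) * pd1 v2 x * (u2 x - v2 x) + (u2 x - v2 x) * pd2 v1 x * (u1 x - v1 x) + (u2 x - v2 x) * pd2 v2 x * (u2 x - v2 x) + (u1 x - v1 x) * pd1 g x * (f x - g x) + (u2 x - v2 x) * pd2 g x * (f x - g x)) + (((u1 x - v1 x) * pd1 (fun y => u1 y - v1 y) x + (u2 x - v2 x) * pd2 (fun y => u1 y - v1 y) x) * v1 x + ((u1 x - v1 x) * pd1 (fun y => u2 y - v2 y) x + (u2 x - v2 x) * pd2 (fun y => u2 y - v2 y) x) * v2 x + ((u1 x - v1 x) * pd1 (fun y => f y - g y) x + (u2 x - v2 x) * pd2 (fun y => f y - g y) x) * g x)) :=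
      integral_congr_ae (Filter.Eventually.of_forall hpt)
    have e2 : ∫ x in domD l, (((u1 x - v1 x) * pd1 v1 x * (u1 x - v1 x) + (u1 x - v1 x) * pd1 v2 x * (u2 x - v2 x) + (u2 x - v2 x) * pd2 v1 x * (u1 x - v1 x) + (u2 x - v2 x) * pd2 v2 x * (u2 x - v2 x) + (u1 x - v1 x) * pd1 g x * (f x - g x) + (u2 x - v2 x) * pd2 g x * (f x - g x)) + (((u1 x - v1 x) * pd1 (fun y => u1 y - v1 y) x + (u2 x - v2 x) * pd2 (fun y => u1 y - v1 y) x) * v1 x + ((u1 x - v1 x) * pd1 (fun y => u2 y - v2 y) x + (u2 x - v2 x) * pd2 (fun y => u2 y - v2 y) x) * v2 x + ((u1 x - v1 x) * pd1 (fun y => f y - g y) x + (u2 x - v2 x) * pd2 (fun y => f y - g y) x) * g x))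
        = (∫ x in domD l, ((u1 x - v1 x) * pd1 v1 x * (u1 x - v1 x) + (u1 x - v1 x) * pd1 v2 x * (u2 x - v2 x) + (u2 x - v2 x) * pd2 v1 x * (u1 x - v1 x) + (u2 x - v2 x) * pd2 v2 x * (u2 x - v2 x) + (u1 x - v1 x) * pd1 g x * (f x - g x) + (u2 x - v2 x) * pd2 g x * (f x - g x))) + ∫ x in domD l, (((u1 x - v1 x) * pd1 (fun y => u1 y - v1 y) x + (u2 x - v2 x) * pd2 (fun y => u1 y - v1 y) x) * v1 x + ((u1 x - v1 x) * pd1 (fun y => u2 y - v2 y) x + (u2 x - v2 x) * pd2 (fun y => u2 y - v2 y) x) * v2 x + ((u1 x - v1 x) * pd1 (fun y => f y - g y) x + (u2 x - v2 x) * pd2 (fun y => f y - g y) x) * g x) := integral_add iI1 iJ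
    rw [e, e2] at hdiv
    linarith
  -- key identity
  have key : (∫ x in domD l, (u1 x * pd1 u1 x * (u1 x - v1 x) + u1 x * pd1 u2 x * (u2 x - v2 x) + u2 x * pd2 u1 x * (u1 x - v1 x) + u2 x * pd2 u2 x * (u2 x - v2 x)))
      - (∫ x in domD l, (v1 x * pd1 v1 x * (u1 x - v1 x) + v1 x * pd1 v2 x * (u2 x - v2 x) + v2 x * pd2 v1 x * (u1 x - v1 x) + v2 x * pd2 v2 x * (u2 x - v2 x)))
      + (∫ x in domD l, (u1 x * pd1 f x * (f x - g x) + u2 x * pd2 f x * (f x - g x)))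
      - (∫ x in domD l, (v1 x * pd1 g x * (f x - g x) + v2 x * pd2 g x * (f x - g x)))
      = - (∫ x in domD l, (((u1 x - v1 x) * pd1 (fun y => u1 y - v1 y) x + (u2 x - v2 x) * pd2 (fun y => u1 y - v1 y) x) * v1 x + ((u1 x - v1 x) * pd1 (fun y => u2 y - v2 y) x + (u2 x - v2 x) * pd2 (fun y => u2 y - v2 y) x) * v2 x + ((u1 x - v1 x) * pd1 (fun y => f y - g y) x + (u2 x - v2 x) * pd2 (fun y => f y - g y) x) * g x)) := by
    rw [hsplit, hI2, add_zero, hI1]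
  rw [key, abs_neg]
  exact final_bound c₁ hc₁ l hl (fun x => u1 x - v1 x) (fun x => u2 x - v2 x)
    (pd1 (fun y => u1 y - v1 y)) (pd2 (fun y => u1 y - v1 y))
    (pd1 (fun y => u2 y - v2 y)) (pd2 (fun y => u2 y - v2 y))
    (pd1 (fun y => f y - g y)) (pd2 (fun y => f y - g y))
    v1 v2 g (fun x => f x - g x)
    (by fun_prop) (by fun_prop) c_p1U1 c_p2U1 c_p1U2 c_p2U2 c_p1FG c_p2FG
    c_v1 c_v2 c_g (by fun_prop) h4U α hα



/-- Estimate \eqref{diffB-2}: with `U = u − v`, `Θ = θ − η`, `Φ = (U,Θ)` and `ψ = (v,η)`,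
there is a constant `c > 0` depending only on `c₁` such that for every `α > 0`,
`|⟨B(φ)−B(ψ), φ−ψ⟩| ≤ α ‖Φ‖² + (3³ c² / (2⁴ α³)) |Φ|² |ψ|⁴_{L⁴}`. -/
theorem B_difference_young_estimate (c₁ : ℝ) (hc₁ : 0 < c₁) :
    ∃ c : ℝ, 0 < c ∧
      ∀ (l : ℝ), 0 < l →
      ∀ (u v : ℝ × ℝ → ℝ × ℝ) (θ η : ℝ × ℝ → ℝ),
        AdmissibleVec l u → AdmissibleVec l v →
        AdmissibleScalar l θ → AdmissibleScalar l η →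
        (L4normVec l (fun x => u x - v x)) ^ 2
          ≤ c₁ * L2normVec l (fun x => u x - v x) * H1normVec l (fun x => u x - v x) →
        (L4normScalar l (fun x => θ x - η x)) ^ 2
          ≤ c₁ * L2normScalar l (fun x => θ x - η x) * H1normScalar l (fun x => θ x - η x) →
        ∀ α : ℝ, 0 < α →
          |B1 l u u (fun x => u x - v x) - B1 l v v (fun x => u x - v x)
              + B2 l u θ (fun x => θ x - η x) - B2 l v η (fun x => θ x - η x)|
            ≤ α * ((H1normVec l (fun x => u x - v x)) ^ 2
                  + (H1normScalar l (fun x => θ x - η x)) ^ 2)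
              + (27 * c ^ 2 / (16 * α ^ 3))
                * ((L2normVec l (fun x => u x - v x)) ^ 2
                  + (L2normScalar l (fun x => θ x - η x)) ^ 2)
                * (∫ x in domD l, ((v x).1 ^ 2 + (v x).2 ^ 2 + (η x) ^ 2) ^ 2) := by
  refine ⟨c₁, hc₁, ?_⟩
  intro l hl u v θ η hu hv hθ hη h4U h4Θ α hα
  obtain ⟨huC, huP, hu0, hu1b, huD⟩ := hu
  obtain ⟨hvC, hvP, hv0, hv1b, hvD⟩ := hv
  obtain ⟨hθC, hθP⟩ := hθ
  obtain ⟨hηC, hηP⟩ := hη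
  simp only [B1, B2, L2normVec, L2normScalar, L4normVec, H1normVec, H1normScalar,
    Prod.fst_sub, Prod.snd_sub] at h4U ⊢
  exact main_aux c₁ hc₁ l hl (fun y => (u y).1) (fun y => (u y).2)
    (fun y => (v y).1) (fun y => (v y).2) θ η
    (contDiff_fst.comp huC) (contDiff_snd.comp huC)
    (contDiff_fst.comp hvC) (contDiff_snd.comp hvC) hθC hηC
    (fun a b => by simp [huP a b]) (fun a b => by simp [huP a b])
    (fun a b => by simp [hvP a b]) (fun a b => by simp [hvP a b])
    hθP hηP
    (fun t => by simp [hu0 t]) (fun t => by simp [hu1b t])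
    (fun t => by simp [hv0 t]) (fun t => by simp [hv1b t])
    huD hvD h4U α hα
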